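/- If two combinatorial cubes h1, h2 satisfy: (1) their edge sets, face-diagonal sets, and interior-diagonal sets are pairwise disjoint across the relations E, D_Q, D_H, (2) no quadrangular face of h1 shares a diagonal with a quadrangular face of h2, and (3) no interior diagonal of h1 is an interior diagonal of h2, then the intersection of h1 and h2 is a common combinatorial face (empty, a vertex, an edge, or a quadrangle). -/
import Mathlib


open Finset

/-- pairs of cube corners at given Hamming distance -/
def cubePairs (k : ℕ) : Finset ((Fin 3 → Fin 2) × (Fin 3 → Fin 2)) :=
  Finset.univ.filter fun p => (Finset.univ.filter fun i => p.1 i ≠ p.2 i).card = k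

def cubeEdges {V : Type} [DecidableEq V] (c : (Fin 3 → Fin 2) → V) : Finset (Sym2 V) :=
  (cubePairs 1).image fun p => s(c p.1, c p.2)

def cubeFaceDiags {V : Type} [DecidableEq V] (c : (Fin 3 → Fin 2) → V) : Finset (Sym2 V) :=
  (cubePairs 2).image fun p => s(c p.1, c p.2)

def cubeIntDiags {V : Type} [DecidableEq V] (c : (Fin 3 → Fin 2) → V) : Finset (Sym2 V) :=
  (cubePairs 3).image fun p => s(c p.1, c p.2)

def cubeFace {V : Type} [DecidableEq V] (c : (Fin 3 → Fin 2) → V) (i : Fin 3) (b : Fin 2) :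
    Finset V :=
  (Finset.univ.filter fun x : Fin 3 → Fin 2 => x i = b).image c

def cubeFaces {V : Type} [DecidableEq V] (c : (Fin 3 → Fin 2) → V) : Finset (Finset V) :=
  Finset.univ.image fun s : Fin 3 × Fin 2 => cubeFace c s.1 s.2

def cubeVerts {V : Type} [DecidableEq V] (c : (Fin 3 → Fin 2) → V) : Finset V :=
  Finset.univ.image c

/-- all combinatorial faces of a cube of dimension ≤ 2 (incl. the empty face) -/
def cubeCells {V : Type} [DecidableEq V] (c : (Fin 3 → Fin 2) → V) : Finset (Finset V) :=
  {∅} ∪ (cubeVerts c).image (fun v => {v}) ∪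
    ((cubePairs 1).image fun p => {c p.1, c p.2}) ∪ cubeFaces c

/-- two cubes intersect in a common combinatorial face -/
def CubesCompatible {V : Type} [DecidableEq V] (c₁ c₂ : (Fin 3 → Fin 2) → V) : Prop :=
  cubeVerts c₁ ∩ cubeVerts c₂ ∈ cubeCells c₁ ∧ cubeVerts c₁ ∩ cubeVerts c₂ ∈ cubeCells c₂

structure HexMesh (V : Type) [DecidableEq V] where
  hexes : Finset ((Fin 3 → Fin 2) → V)
  inj : ∀ h ∈ hexes, Function.Injective h
  shared : ∀ q : Finset V, (hexes.filter fun h => q ∈ cubeFaces h).card ≤ 2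

def HexMesh.boundary {V : Type} [DecidableEq V] (M : HexMesh V) : Finset (Finset V) :=
  (M.hexes.sup cubeFaces).filter fun q => (M.hexes.filter fun h => q ∈ cubeFaces h).card = 1

set_option synthInstance.maxSize 1000 in
set_option maxHeartbeats 1000000 in
lemma distCases : ∀ x y : Fin 3 → Fin 2, x ≠ y →
    (x,y) ∈ cubePairs 1 ∨ (x,y) ∈ cubePairs 2 ∨ (x,y) ∈ cubePairs 3 := by decide

set_option synthInstance.maxSize 1000 in
set_option maxHeartbeats 1000000 in
lemma cubePairs_one_swap : ∀ x y : Fin 3 → Fin 2, (x,y) ∈ cubePairs 1 → (y,x) ∈ cubePairs 1 := by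
  decide

set_option synthInstance.maxSize 1000 in
set_option maxHeartbeats 1000000 in
lemma noTriangle : ∀ x y z : Fin 3 → Fin 2,
    ¬((x,y) ∈ cubePairs 1 ∧ (y,z) ∈ cubePairs 1 ∧ (x,z) ∈ cubePairs 1) := by decide

lemma edge_pair {V : Type} [DecidableEq V] {c : (Fin 3 → Fin 2) → V}
    (hinj : Function.Injective c) {x y : Fin 3 → Fin 2}
    (hmem : s(c x, c y) ∈ cubeEdges c) : (x, y) ∈ cubePairs 1 := by
  simp only [cubeEdges, Finset.mem_image] at hmem
  obtain ⟨p, hp, heq⟩ := hmem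
  rw [Sym2.eq_iff] at heq
  rcases heq with ⟨e1, e2⟩ | ⟨e1, e2⟩
  · have hpe : p = (x, y) := Prod.ext (hinj e1) (hinj e2)
    rwa [hpe] at hp
  · have hpe : p = (y, x) := Prod.ext (hinj e1) (hinj e2)
    rw [hpe] at hp
    exact cubePairs_one_swap _ _ hp

/-- Sufficiency of the compatibility test: if the relations E, D_Q, D_H taken
over two cubes are pairwise disjoint, the cubes share no face diagonal, and
share no interior diagonal, then the two cubes intersect in a common
combinatorial face. -/
theorem compatibility_test_sufficient {V : Type} [DecidableEq V]
    (h₁ h₂ : (Fin 3 → Fin 2) → V)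
    (hinj₁ : Function.Injective h₁) (hinj₂ : Function.Injective h₂)
    (hEDQ : Disjoint (cubeEdges h₁ ∪ cubeEdges h₂) (cubeFaceDiags h₁ ∪ cubeFaceDiags h₂))
    (hEDH : Disjoint (cubeEdges h₁ ∪ cubeEdges h₂) (cubeIntDiags h₁ ∪ cubeIntDiags h₂))
    (hDQDH : Disjoint (cubeFaceDiags h₁ ∪ cubeFaceDiags h₂) (cubeIntDiags h₁ ∪ cubeIntDiags h₂))
    (hquadDiag : Disjoint (cubeFaceDiags h₁) (cubeFaceDiags h₂))
    (hintDiag : Disjoint (cubeIntDiags h₁) (cubeIntDiags h₂)) :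
    CubesCompatible h₁ h₂ := by
  classical
  have memVerts : ∀ (c : (Fin 3 → Fin 2) → V) (v : V), v ∈ cubeVerts c → ∃ x, c x = v := by
    intro c v hv
    simpa [cubeVerts] using hv
  set T := cubeVerts h₁ ∩ cubeVerts h₂ with hTdef
  have key : ∀ v ∈ T, ∀ w ∈ T, v ≠ w → s(v,w) ∈ cubeEdges h₁ ∧ s(v,w) ∈ cubeEdges h₂ := by
    intro v hv w hw hvw
    obtain ⟨x, hx⟩ := memVerts h₁ v (Finset.mem_of_mem_inter_left hv)
    obtain ⟨a, ha⟩ := memVerts h₂ v (Finset.mem_of_mem_inter_right hv)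
    obtain ⟨y, hy⟩ := memVerts h₁ w (Finset.mem_of_mem_inter_left hw)
    obtain ⟨b, hb⟩ := memVerts h₂ w (Finset.mem_of_mem_inter_right hw)
    have hxy : x ≠ y := fun h => hvw (by rw [← hx, ← hy, h])
    have hab : a ≠ b := fun h => hvw (by rw [← ha, ← hb, h])
    have m1 : s(v,w) ∈ cubeEdges h₁ ∨ s(v,w) ∈ cubeFaceDiags h₁ ∨ s(v,w) ∈ cubeIntDiags h₁ := by
      rcases distCases x y hxy with h | h | h
      · exact Or.inl (Finset.mem_image.2 ⟨(x,y), h, by rw [hx, hy]⟩)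
      · exact Or.inr (Or.inl (Finset.mem_image.2 ⟨(x,y), h, by rw [hx, hy]⟩))
      · exact Or.inr (Or.inr (Finset.mem_image.2 ⟨(x,y), h, by rw [hx, hy]⟩))
    have m2 : s(v,w) ∈ cubeEdges h₂ ∨ s(v,w) ∈ cubeFaceDiags h₂ ∨ s(v,w) ∈ cubeIntDiags h₂ := by
      rcases distCases a b hab with h | h | h
      · exact Or.inl (Finset.mem_image.2 ⟨(a,b), h, by rw [ha, hb]⟩)
      · exact Or.inr (Or.inl (Finset.mem_image.2 ⟨(a,b), h, by rw [ha, hb]⟩))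
      · exact Or.inr (Or.inr (Finset.mem_image.2 ⟨(a,b), h, by rw [ha, hb]⟩))
    rcases m1 with e1 | q1 | i1 <;> rcases m2 with e2 | q2 | i2
    · exact ⟨e1, e2⟩
    · exact absurd (Finset.mem_union_right _ q2)
        (Finset.disjoint_left.mp hEDQ (Finset.mem_union_left _ e1))
    · exact absurd (Finset.mem_union_right _ i2)
        (Finset.disjoint_left.mp hEDH (Finset.mem_union_left _ e1))
    · exact absurd (Finset.mem_union_left _ q1)
        (Finset.disjoint_left.mp hEDQ (Finset.mem_union_right _ e2))
    · exact absurd q2 (Finset.disjoint_left.mp hquadDiag q1)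
    · exact absurd (Finset.mem_union_right _ i2)
        (Finset.disjoint_left.mp hDQDH (Finset.mem_union_left _ q1))
    · exact absurd (Finset.mem_union_left _ i1)
        (Finset.disjoint_left.mp hEDH (Finset.mem_union_right _ e2))
    · exact absurd (Finset.mem_union_left _ i1)
        (Finset.disjoint_left.mp hDQDH (Finset.mem_union_right _ q2))
    · exact absurd i2 (Finset.disjoint_left.mp hintDiag i1)
  have hcard : T.card ≤ 2 := by
    by_contra h
    push_neg at h
    obtain ⟨v, w, u, hv, hw, hu, hvw, hvu, hwu⟩ := Finset.two_lt_card_iff.1 h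
    obtain ⟨x, hx⟩ := memVerts h₁ v (Finset.mem_of_mem_inter_left hv)
    obtain ⟨y, hy⟩ := memVerts h₁ w (Finset.mem_of_mem_inter_left hw)
    obtain ⟨z, hz⟩ := memVerts h₁ u (Finset.mem_of_mem_inter_left hu)
    have p1 : (x, y) ∈ cubePairs 1 := edge_pair hinj₁
      (by rw [hx, hy]; exact (key v hv w hw hvw).1)
    have p2 : (y, z) ∈ cubePairs 1 := edge_pair hinj₁
      (by rw [hy, hz]; exact (key w hw u hu hwu).1)
    have p3 : (x, z) ∈ cubePairs 1 := edge_pair hinj₁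
      (by rw [hx, hz]; exact (key v hv u hu hvu).1)
    exact noTriangle x y z ⟨p1, p2, p3⟩
  have main : ∀ (c : (Fin 3 → Fin 2) → V),
      (∀ v ∈ T, v ∈ cubeVerts c) → (∀ v ∈ T, ∀ w ∈ T, v ≠ w → s(v,w) ∈ cubeEdges c) →
      T ∈ cubeCells c := by
    intro c hsub hedge
    rcases Nat.lt_or_ge T.card 1 with h | h
    · have hE : T = ∅ := Finset.card_eq_zero.1 (Nat.lt_one_iff.1 h)
      rw [hE]
      exact Finset.mem_union_left _ (Finset.mem_union_left _
        (Finset.mem_union_left _ (Finset.mem_singleton_self ∅)))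
    rcases Nat.lt_or_ge T.card 2 with h2 | h2
    · have h1 : T.card = 1 := le_antisymm (Nat.lt_succ_iff.1 h2) h
      obtain ⟨v, hv⟩ := Finset.card_eq_one.1 h1
      have hvT : v ∈ T := hv ▸ Finset.mem_singleton_self v
      rw [hv]
      exact Finset.mem_union_left _ (Finset.mem_union_left _ (Finset.mem_union_right _
        (Finset.mem_image_of_mem _ (hsub v hvT))))
    · have hc2 : T.card = 2 := le_antisymm hcard h2
      obtain ⟨v, w, hvw, hT2⟩ := Finset.card_eq_two.1 hc2
      have hvT : v ∈ T := by rw [hT2]; simp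
      have hwT : w ∈ T := by rw [hT2]; simp
      have he := hedge v hvT w hwT hvw
      simp only [cubeEdges, Finset.mem_image] at he
      obtain ⟨p, hp, heq⟩ := he
      rw [Sym2.eq_iff] at heq
      have hTp : T = {c p.1, c p.2} := by
        rcases heq with ⟨e1, e2⟩ | ⟨e1, e2⟩
        · rw [hT2, ← e1, ← e2]
        · rw [hT2, ← e1, ← e2, Finset.pair_comm]
      rw [hTp]
      exact Finset.mem_union_left _ (Finset.mem_union_right _
        (Finset.mem_image_of_mem _ hp))
  refine ⟨main h₁ (fun v hv => Finset.mem_of_mem_inter_left hv)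
      (fun v hv w hw hvw => (key v hv w hw hvw).1),
    main h₂ (fun v hv => Finset.mem_of_mem_inter_right hv)
      (fun v hv w hw hvw => (key v hv w hw hvw).2)⟩
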